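/- Let E = ℂⁿ with its standard Hermitian inner product, let C, V, Q be linear subspaces of E with Q ⊆ C, let Π_C be the orthogonal projection onto C, and let P : E → E be a linear projector onto Q (P ∘ P = P, range P = Q). Let r₀ ∈ E and r₁ = (I − Π_C) r₀. Then inf_{d₁ ∈ V + C} ‖r₀ − d₁‖ ≤ inf_{d₂ ∈ (I − P)(V)} ‖(I − P) r₁ − d₂‖; that is, when the recycling space C contains the subspace Q, the GCRO-DR residual bound reduces to that of the deflated problem. -/

import Mathlib

/-- The orthogonal projection of `ℂⁿ` onto a subspace, as a continuous linear
endomorphism of `ℂⁿ`. -/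
noncomputable def orthProj {n : ℕ} (S : Submodule ℂ (EuclideanSpace ℂ (Fin n))) :
    EuclideanSpace ℂ (Fin n) →L[ℂ] EuclideanSpace ℂ (Fin n) :=
  S.subtypeL.comp (S.orthogonalProjectionOnto)

/-!
Since `Π_C r₀` and `P r₁` both lie in `C`, the vector `(I − P) r₁` differs from `r₀` by an
element of `V + C`, so both are at the same distance from `V + C`. And `(I − P)(V) ⊆ V + C`
because `P` takes values in `Q ⊆ C`, so the distance to the smaller set is the larger one.
-/

open Metric

theorem Submodule.infDist_eq_of_sub_mem {R M : Type*} [Ring R] [SeminormedAddCommGroup M]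
    [Module R M] {S : Submodule R M} {x y : M} (h : x - y ∈ S) :
    infDist x S = infDist y S := by
  have h' : x - y ∈ S.toAddSubgroup := h
  rw [← Submodule.coe_toAddSubgroup, ← QuotientAddGroup.norm_mk, ← QuotientAddGroup.norm_mk,
    (QuotientAddGroup.eq_iff_sub_mem).2 h']

theorem gcrodr_deflated_bound_of_le_general {n : ℕ}
    (C V Q : Submodule ℂ (EuclideanSpace ℂ (Fin n))) (hQC : Q ≤ C)
    (P : EuclideanSpace ℂ (Fin n) →L[ℂ] EuclideanSpace ℂ (Fin n))
    (hPrange : LinearMap.range P.toLinearMap = Q)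
    (r₀ r₁ : EuclideanSpace ℂ (Fin n)) (hr₁ : r₁ = r₀ - orthProj C r₀) :
    Metric.infDist r₀ ((V ⊔ C : Submodule ℂ (EuclideanSpace ℂ (Fin n))) : Set _) ≤
      Metric.infDist (r₁ - P r₁) ((fun x => x - P x) '' (V : Set _)) := by
  have hP_mem : ∀ x, P x ∈ C := fun x => hQC (hPrange ▸ LinearMap.mem_range_self _ x)
  have hshift : r₀ - (r₁ - P r₁) ∈ V ⊔ C := by
    have : r₀ - (r₁ - P r₁) = orthProj C r₀ + P r₁ := by rw [hr₁]; abel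
    rw [this]
    exact Submodule.mem_sup_right (C.add_mem (C.orthogonalProjectionOnto r₀).2 (hP_mem r₁))
  have himage : (fun x => x - P x) '' (V : Set _) ⊆ (V ⊔ C : Submodule ℂ _) := by
    rintro _ ⟨v, hv, rfl⟩
    exact Submodule.sub_mem_sup hv (hP_mem v)
  calc infDist r₀ ((V ⊔ C : Submodule ℂ (EuclideanSpace ℂ (Fin n))) : Set _)
      = infDist (r₁ - P r₁) ((V ⊔ C : Submodule ℂ (EuclideanSpace ℂ (Fin n))) : Set _) :=
        Submodule.infDist_eq_of_sub_mem hshift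
    _ ≤ infDist (r₁ - P r₁) ((fun x => x - P x) '' (V : Set _)) :=
        infDist_le_infDist_of_subset himage ⟨_, Set.mem_image_of_mem _ V.zero_mem⟩

/-- When the recycling space `C` contains the subspace `Q` (with `P` a linear projector
onto `Q`), the GCRO-DR residual bound reduces to that of the deflated problem:
`inf_{d₁ ∈ V + C} ‖r₀ − d₁‖ ≤ inf_{d₂ ∈ (I − P)(V)} ‖(I − P) r₁ − d₂‖`
where `r₁ = (I − Π_C) r₀`. -/
theorem gcrodr_deflated_bound_of_le {n : ℕ}
    (C V Q : Submodule ℂ (EuclideanSpace ℂ (Fin n))) (hQC : Q ≤ C)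
    (P : EuclideanSpace ℂ (Fin n) →L[ℂ] EuclideanSpace ℂ (Fin n))
    (hP : P.comp P = P) (hPrange : LinearMap.range P.toLinearMap = Q)
    (r₀ r₁ : EuclideanSpace ℂ (Fin n)) (hr₁ : r₁ = r₀ - orthProj C r₀) :
    Metric.infDist r₀ ((V ⊔ C : Submodule ℂ (EuclideanSpace ℂ (Fin n))) : Set _) ≤
      Metric.infDist (r₁ - P r₁) ((fun x => x - P x) '' (V : Set _)) :=
  gcrodr_deflated_bound_of_le_general C V Q hQC P hPrange r₀ r₁ hr₁
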